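/- arXiv:1812.05332 — 5 statements merged into one kernel-verified Lean document; each statement's English description precedes it below -/
import Mathlib

section
/- Let f : C → D be a discrete Conduché functor between 1-categories. If D is free on a graph (i.e., every arrow of D decomposes uniquely as a composite of a nonempty finite sequence of indecomposable arrows, or is an identity), then C is free on a graph, with generating arrows exactly the preimages under f of the generating arrows of D. -/
open CategoryTheory

/-- A factorization of an arrow `γ : x ⟶ y` through an intermediate object. -/
structure Factorization {C : Type*} [Category C] {x y : C} (γ : x ⟶ y) : Type _ where
  mid : C
  left : x ⟶ mid
  right : mid ⟶ y
  fac : left ≫ right = γ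

/-- The image of a factorization under a functor. -/
def factMap {C D : Type*} [Category C] [Category D] (F : C ⥤ D)
    {x y : C} (γ : x ⟶ y) (p : Factorization γ) : Factorization (F.map γ) where
  mid := F.obj p.mid
  left := F.map p.left
  right := F.map p.right
  fac := by rw [← F.map_comp, p.fac]

/-- A functor is a discrete Conduché functor if every factorization of the image of an
arrow lifts uniquely to a factorization of that arrow. -/
def IsDiscreteConduche {C D : Type*} [Category C] [Category D] (F : C ⥤ D) : Prop :=
  ∀ ⦃x y : C⦄ (γ : x ⟶ y), Function.Bijective (factMap F γ)

/-- Composable sequences (possibly empty) of arrows belonging to a distinguished set `S`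
of generating arrows. -/
inductive GenPath {C : Type*} [Category C] (S : ∀ ⦃x y : C⦄, (x ⟶ y) → Prop) :
    C → C → Type _
  | nil (x : C) : GenPath S x x
  | cons {x y z : C} (f : x ⟶ y) (hf : S f) (p : GenPath S y z) : GenPath S x z

/-- Evaluation of a composable sequence of generators as an arrow of the category;
the empty sequence evaluates to an identity. -/
def GenPath.eval {C : Type*} [Category C] {S : ∀ ⦃x y : C⦄, (x ⟶ y) → Prop} :
    ∀ {x y : C}, GenPath S x y → (x ⟶ y)
  | _, _, .nil x => 𝟙 x
  | _, _, .cons f _ p => f ≫ p.eval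

/-- `S` is a basis for `C` (i.e. `C` is free on the graph with arrows `S`) if every arrow
of `C` is the composite of a unique composable sequence of arrows of `S`. -/
def IsBasis {C : Type*} [Category C] (S : ∀ ⦃x y : C⦄, (x ⟶ y) → Prop) : Prop :=
  ∀ {x y : C} (γ : x ⟶ y), ∃! p : GenPath S x y, p.eval = γ



/-!
Paths of generators in `C` are lifted along `F` one step at a time: surjectivity of `factMap F γ`
lifts the splitting of the first generator off a path in `D`, and the empty path lifts because
`F` reflects identities. Uniqueness comes from injectivity of `factMap F γ`, since in a free
category an arrow has at most one factorization whose first factor is a generator.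
-/

namespace IsBasis

variable {D : Type*} [Category D] {S : ∀ ⦃x y : D⦄, (x ⟶ y) → Prop}

theorem factorization_eq (hS : IsBasis S) {d e : D} {γ : d ⟶ e} {P Q : Factorization γ}
    (hP : S P.left) (hQ : S Q.left) : P = Q := by
  obtain ⟨m₁, g₁, e₁, rfl⟩ := P
  obtain ⟨m₂, g₂, e₂, he⟩ := Q
  obtain ⟨q₁, rfl⟩ := (hS e₁).exists
  obtain ⟨q₂, rfl⟩ := (hS e₂).exists
  have : GenPath.cons g₁ hP q₁ = .cons g₂ hQ q₂ := (hS _).unique rfl he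
  cases this
  rfl

theorem comp_ne_id (hS : IsBasis S) {d m : D} {g : d ⟶ m} (hg : S g) (e : m ⟶ d) :
    g ≫ e ≠ 𝟙 d := by
  intro h
  obtain ⟨q, rfl⟩ := (hS e).exists
  have : GenPath.cons g hg q = .nil d := (hS _).unique h rfl
  cases this

end IsBasis

namespace IsDiscreteConduche

variable {C D : Type*} [Category C] [Category D] {F : C ⥤ D}

theorem exists_eq_eqToHom_of_map_eq_eqToHom (hF : IsDiscreteConduche F) {x y : C} (γ : x ⟶ y)
    (h : F.obj x = F.obj y) (hγ : F.map γ = eqToHom h) : ∃ hxy : x = y, γ = eqToHom hxy := by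
  have hfac : factMap F γ ⟨y, γ, 𝟙 y, Category.comp_id γ⟩ =
      factMap F γ ⟨x, 𝟙 x, γ, Category.id_comp γ⟩ := by
    simp only [factMap, Factorization.mk.injEq, hγ, F.map_id]
    exact ⟨h.symm, eqToHom_heq_id_dom _ _ h, (eqToHom_heq_id_cod _ _ h).symm⟩
  cases (hF γ).1 hfac
  exact ⟨rfl, rfl⟩

variable {S : ∀ ⦃x y : D⦄, (x ⟶ y) → Prop}

theorem exists_genPath_eval_eq (hF : IsDiscreteConduche F) {x y : C} (γ : x ⟶ y)
    (q : GenPath S (F.obj x) (F.obj y)) (hq : q.eval = F.map γ) :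
    ∃ p : GenPath (fun ⦃x y : C⦄ (γ : x ⟶ y) => S (F.map γ)) x y, p.eval = γ := by
  suffices ∀ {d e : D} (q : GenPath S d e) {x y : C} (γ : x ⟶ y) (hx : F.obj x = d)
      (hy : F.obj y = e), F.map γ = eqToHom hx ≫ q.eval ≫ eqToHom hy.symm →
      ∃ p : GenPath (fun ⦃x y : C⦄ (γ : x ⟶ y) => S (F.map γ)) x y, p.eval = γ from
    this q γ rfl rfl (by simp [hq])
  intro d e q
  induction q with
  | nil d =>
    intro x y γ hx hy hγ
    subst hx
    obtain ⟨rfl, rfl⟩ :=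
      hF.exists_eq_eqToHom_of_map_eq_eqToHom γ hy.symm (by simpa [GenPath.eval] using hγ)
    exact ⟨.nil x, rfl⟩
  | cons g hg q ih =>
    intro x y γ hx hy hγ
    subst hx hy
    obtain ⟨⟨z, a, b, rfl⟩, hab⟩ :=
      (hF γ).2 ⟨_, g, q.eval, by simpa [GenPath.eval] using hγ.symm⟩
    simp only [factMap, Factorization.mk.injEq] at hab
    obtain ⟨rfl, ha, hb⟩ := hab
    obtain rfl := eq_of_heq ha
    obtain ⟨p, rfl⟩ := ih b rfl rfl (by simpa using eq_of_heq hb)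
    exact ⟨.cons a hg p, rfl⟩

theorem genPath_eval_injective (hF : IsDiscreteConduche F) (hS : IsBasis S) {x y : C} :
    Function.Injective
      (GenPath.eval : GenPath (fun ⦃x y : C⦄ (γ : x ⟶ y) => S (F.map γ)) x y → (x ⟶ y)) := by
  intro p₁
  induction p₁ with
  | nil x =>
    rintro (_ | ⟨f, hf, t⟩) h
    · rfl
    · exact absurd (by simpa [GenPath.eval] using (congrArg F.map h).symm) (hS.comp_ne_id hf _)
  | cons f₁ hf₁ t₁ ih =>
    rintro (_ | ⟨f₂, hf₂, t₂⟩) h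
    · exact absurd (by simpa [GenPath.eval] using congrArg F.map h) (hS.comp_ne_id hf₁ _)
    · simp only [GenPath.eval] at h
      have hfac : (⟨_, f₁, t₁.eval, rfl⟩ : Factorization (f₁ ≫ t₁.eval)) =
          ⟨_, f₂, t₂.eval, h.symm⟩ := (hF _).1 (hS.factorization_eq hf₁ hf₂)
      obtain ⟨rfl, hf, ht⟩ := Factorization.mk.inj hfac
      obtain rfl := eq_of_heq hf
      obtain rfl := ih (eq_of_heq ht)
      rfl

end IsDiscreteConduche

/-- If `f : C → D` is a discrete Conduché functor and `D` is free on a graph with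
generating arrows `S`, then `C` is free on a graph whose generating arrows are exactly
the preimages under `f` of the arrows of `S`. -/
theorem isBasis_preimage_of_isDiscreteConduche {C D : Type*} [Category C] [Category D]
    (F : C ⥤ D) (hF : IsDiscreteConduche F) (S : ∀ ⦃x y : D⦄, (x ⟶ y) → Prop)
    (hS : IsBasis S) :
    IsBasis (fun ⦃x y : C⦄ (γ : x ⟶ y) => S (F.map γ)) := by
  intro x y γ
  obtain ⟨q, hq⟩ := (hS (F.map γ)).exists
  obtain ⟨p, hp⟩ := hF.exists_genPath_eval_eq γ q hq
  exact ⟨p, hp, fun p' hp' => hF.genPath_eval_injective hS (hp'.trans hp.symm)⟩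
end

section
/- Let u be a well formed word of the form u = v e w where e is well formed and v, w are arbitrary words. If e' is a well formed word with the same n-source and n-target as e, then v e' w is also well formed. -/
/-- The alphabet associated with a cellular extension of an `n`-category: a symbol `c_α`
for each generator `α`, a symbol `i_x` for each `n`-cell `x`, a composition symbol `∗_k`
for each `0 ≤ k ≤ n`, and opening and closing parentheses. -/
inductive CESym (G X : Type*) (n : ℕ) : Type _
  | gen : G → CESym G X n
  | idd : X → CESym G X n
  | comp : Fin (n + 1) → CESym G X n
  | lpar : CESym G X n
  | rpar : CESym G X n

/-- The contribution of a symbol to the parenthesis count: `+1` for an opening parenthesis,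
`-1` for a closing one, `0` otherwise. -/
def pval {G X : Type*} {n : ℕ} : CESym G X n → ℤ
  | .lpar => 1
  | .rpar => -1
  | _ => 0

/-- `P w i` is the number of opening parentheses among the first `i + 1` symbols of `w`
minus the number of closing parentheses among them. -/
def P {G X : Type*} {n : ℕ} (w : List (CESym G X n)) (i : ℕ) : ℤ :=
  ((w.take (i + 1)).map pval).sum

/-- A word is well parenthesized if it is nonempty, the running parenthesis count is
nonnegative at every position, and vanishes exactly at the last position. -/
def WellParen {G X : Type*} {n : ℕ} (w : List (CESym G X n)) : Prop :=
  w ≠ [] ∧ (∀ i < w.length, 0 ≤ P w i) ∧ ∀ i < w.length, (P w i = 0 ↔ i = w.length - 1)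

/-- Well formed words (syntactically): atoms `(c_α)` and `(i_x)` are well formed, and
`(v ∗_k w)` is well formed whenever `v` and `w` are. -/
inductive WFS {G X : Type*} {n : ℕ} : List (CESym G X n) → Prop
  | gen (α : G) : WFS [.lpar, .gen α, .rpar]
  | idd (x : X) : WFS [.lpar, .idd x, .rpar]
  | comp (k : Fin (n + 1)) (v w : List (CESym G X n)) : WFS v → WFS w →
      WFS (.lpar :: v ++ .comp k :: w ++ [.rpar])

/-- The word `(v ∗_k w)`. -/
def cw {G X : Type*} {n : ℕ} (k : Fin (n + 1)) (v w : List (CESym G X n)) :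
    List (CESym G X n) :=
  .lpar :: v ++ .comp k :: w ++ [.rpar]

/-- The data and axioms of a strict ω-category (globular sets with compositions and units,
satisfying the globular identities, associativity, unit, functoriality and interchange
axioms). Only the cells of dimension at most `n` are used for an `n`-category. -/
structure StrictOmegaCat where
  Obj : ℕ → Type*
  src : ∀ {k m : ℕ}, k < m → Obj m → Obj k
  tgt : ∀ {k m : ℕ}, k < m → Obj m → Obj k
  comp : ∀ {k m : ℕ}, k < m → Obj m → Obj m → Obj m
  unit : ∀ {k m : ℕ}, k < m → Obj k → Obj m
  src_src : ∀ {l k m : ℕ} (h1 : l < k) (h2 : k < m) (x : Obj m),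
      src h1 (src h2 x) = src (h1.trans h2) x
  src_tgt : ∀ {l k m : ℕ} (h1 : l < k) (h2 : k < m) (x : Obj m),
      src h1 (tgt h2 x) = src (h1.trans h2) x
  tgt_src : ∀ {l k m : ℕ} (h1 : l < k) (h2 : k < m) (x : Obj m),
      tgt h1 (src h2 x) = tgt (h1.trans h2) x
  tgt_tgt : ∀ {l k m : ℕ} (h1 : l < k) (h2 : k < m) (x : Obj m),
      tgt h1 (tgt h2 x) = tgt (h1.trans h2) x
  src_comp_self : ∀ {k m : ℕ} (h : k < m) (x y : Obj m), src h x = tgt h y →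
      src h (comp h x y) = src h y
  tgt_comp_self : ∀ {k m : ℕ} (h : k < m) (x y : Obj m), src h x = tgt h y →
      tgt h (comp h x y) = tgt h x
  src_comp_lt : ∀ {l k m : ℕ} (h1 : l < k) (h2 : k < m) (x y : Obj m),
      src h2 x = tgt h2 y → src (h1.trans h2) (comp h2 x y) = src (h1.trans h2) x
  tgt_comp_lt : ∀ {l k m : ℕ} (h1 : l < k) (h2 : k < m) (x y : Obj m),
      src h2 x = tgt h2 y → tgt (h1.trans h2) (comp h2 x y) = tgt (h1.trans h2) x
  src_comp_gt : ∀ {k l m : ℕ} (h1 : k < l) (h2 : l < m) (x y : Obj m),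
      src (h1.trans h2) x = tgt (h1.trans h2) y →
      src h2 (comp (h1.trans h2) x y) = comp h1 (src h2 x) (src h2 y)
  tgt_comp_gt : ∀ {k l m : ℕ} (h1 : k < l) (h2 : l < m) (x y : Obj m),
      src (h1.trans h2) x = tgt (h1.trans h2) y →
      tgt h2 (comp (h1.trans h2) x y) = comp h1 (tgt h2 x) (tgt h2 y)
  src_unit : ∀ {k m : ℕ} (h : k < m) (x : Obj k), src h (unit h x) = x
  tgt_unit : ∀ {k m : ℕ} (h : k < m) (x : Obj k), tgt h (unit h x) = x
  comp_assoc : ∀ {k m : ℕ} (h : k < m) (x y z : Obj m),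
      src h x = tgt h y → src h y = tgt h z →
      comp h (comp h x y) z = comp h x (comp h y z)
  comp_unit_src : ∀ {k m : ℕ} (h : k < m) (x : Obj m),
      comp h x (unit h (src h x)) = x
  unit_tgt_comp : ∀ {k m : ℕ} (h : k < m) (x : Obj m),
      comp h (unit h (tgt h x)) x = x
  unit_comp : ∀ {k l m : ℕ} (h1 : k < l) (h2 : l < m) (x y : Obj l),
      src h1 x = tgt h1 y →
      unit h2 (comp h1 x y) = comp (h1.trans h2) (unit h2 x) (unit h2 y)
  interchange : ∀ {k l m : ℕ} (h1 : k < l) (h2 : l < m) (x y z t : Obj m),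
      src (h1.trans h2) x = tgt (h1.trans h2) y →
      src (h1.trans h2) z = tgt (h1.trans h2) t →
      src h2 x = tgt h2 z → src h2 y = tgt h2 t →
      comp h2 (comp (h1.trans h2) x y) (comp (h1.trans h2) z t) =
        comp (h1.trans h2) (comp h2 x z) (comp h2 y t)

/-- An ω-category is an `n`-category when every cell of dimension greater than `n` is
degenerate (a unit on an `n`-cell). -/
def StrictOmegaCat.IsNCat (Ω : StrictOmegaCat) (n : ℕ) : Prop :=
  ∀ (m : ℕ) (h : n < m) (x : Ω.Obj m), ∃ y : Ω.Obj n, x = Ω.unit h y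

/-- A cellular extension of the `n`-truncation of `Ω`: a set of generators together with
source and target `n`-cells, satisfying the globular conditions (vacuous when `n = 0`). -/
structure CellExt (Ω : StrictOmegaCat) (n : ℕ) where
  Gen : Type*
  σ : Gen → Ω.Obj n
  τ : Gen → Ω.Obj n
  src_glob : ∀ (h : n - 1 < n) (α : Gen), Ω.src h (σ α) = Ω.src h (τ α)
  tgt_glob : ∀ (h : n - 1 < n) (α : Gen), Ω.tgt h (σ α) = Ω.tgt h (τ α)

/-- `WF E w a b` means that `w` is a well formed word (term) over the cellular extension
`E`, with `n`-source `a` and `n`-target `b`. -/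
inductive WF {Ω : StrictOmegaCat} {n : ℕ} (E : CellExt Ω n) :
    List (CESym E.Gen (Ω.Obj n) n) → Ω.Obj n → Ω.Obj n → Prop
  | gen (α : E.Gen) : WF E [.lpar, .gen α, .rpar] (E.σ α) (E.τ α)
  | idd (x : Ω.Obj n) : WF E [.lpar, .idd x, .rpar] x x
  | compn (v w : List (CESym E.Gen (Ω.Obj n) n)) (a b c : Ω.Obj n) :
      WF E v b c → WF E w a b → WF E (cw (Fin.last n) v w) a c
  | compk (k : ℕ) (hk : k < n) (v w : List (CESym E.Gen (Ω.Obj n) n))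
      (a b a' b' : Ω.Obj n) :
      WF E v a b → WF E w a' b' → Ω.src hk a = Ω.tgt hk b' →
      WF E (cw ⟨k, Nat.lt_succ_of_lt hk⟩ v w) (Ω.comp hk a a') (Ω.comp hk b b')


section Aux

variable {Ω : StrictOmegaCat} {n : ℕ} {E : CellExt Ω n}

/-- The parenthesis-count of a word. -/
def psum {G X : Type*} {n : ℕ} (l : List (CESym G X n)) : ℤ := (l.map pval).sum

@[simp] lemma psum_nil {G X : Type*} {n : ℕ} : psum ([] : List (CESym G X n)) = 0 := rfl

@[simp] lemma psum_cons {G X : Type*} {n : ℕ} (a : CESym G X n) (l : List (CESym G X n)) :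
    psum (a :: l) = pval a + psum l := by simp [psum]

@[simp] lemma psum_append {G X : Type*} {n : ℕ} (l m : List (CESym G X n)) :
    psum (l ++ m) = psum l + psum m := by simp [psum]

lemma wf_length {u : List (CESym E.Gen (Ω.Obj n) n)} {a b : Ω.Obj n}
    (h : WF E u a b) : 3 ≤ u.length := by
  cases h <;> simp [cw] <;> omega

lemma wf_head {u : List (CESym E.Gen (Ω.Obj n) n)} {a b : Ω.Obj n}
    (h : WF E u a b) : ∃ t, u = .lpar :: t := by
  cases h <;> exact ⟨_, rfl⟩

lemma wf_psum {u : List (CESym E.Gen (Ω.Obj n) n)} {a b : Ω.Obj n}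
    (h : WF E u a b) : psum u = 0 := by
  induction h with
  | gen α => simp [psum, pval]
  | idd x => simp [psum, pval]
  | compn v w a b c hv hw ihv ihw => simp [cw, pval, ihv, ihw]
  | compk k hk v w a b a' b' hv hw hc ihv ihw => simp [cw, pval, ihv, ihw]

lemma nonneg_of_pos_aux {v : List (CESym E.Gen (Ω.Obj n) n)}
    (hz : psum v = 0)
    (hpos : ∀ p q, v = p ++ q → p ≠ [] → q ≠ [] → 1 ≤ psum p) :
    ∀ p q, v = p ++ q → 0 ≤ psum p := by
  intro p q hpq
  rcases eq_or_ne p [] with rfl | hp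
  · simp
  rcases eq_or_ne q [] with rfl | hq
  · have hpu : p = v := by simpa using hpq.symm
    rw [hpu, hz]
  · exact le_trans (by norm_num) (hpos p q hpq hp hq)

lemma cw_prefix_pos_aux {k : Fin (n + 1)} {v w : List (CESym E.Gen (Ω.Obj n) n)}
    (hzv : psum v = 0) (hzw : psum w = 0)
    (hpv : ∀ p q, v = p ++ q → p ≠ [] → q ≠ [] → 1 ≤ psum p)
    (hpw : ∀ p q, w = p ++ q → p ≠ [] → q ≠ [] → 1 ≤ psum p) :
    ∀ p q, cw k v w = p ++ q → p ≠ [] → q ≠ [] → 1 ≤ psum p := by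
  intro p q hpq hp hq
  rcases p with _ | ⟨p0, p1⟩
  · exact absurd rfl hp
  simp only [cw, List.cons_append] at hpq
  injection hpq with h0 h1
  subst h0
  rw [List.append_assoc, List.cons_append] at h1
  have key : 0 ≤ psum p1 := by
    rcases List.append_eq_append_iff.mp h1 with ⟨r, hr1, hr2⟩ | ⟨r, hr1, hr2⟩
    · -- p1 = v ++ r, comp k :: (w ++ [rpar]) = r ++ q
      rcases r with _ | ⟨r0, r1⟩
      · have : psum p1 = 0 := by simp [hr1, hzv]
        omega
      · injection hr2 with h2 h3
        subst h2
        rw [List.append_eq] at h3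
        have hps : psum p1 = psum r1 := by simp [hr1, hzv, pval]
        have key2 : 0 ≤ psum r1 := by
          rcases List.append_eq_append_iff.mp h3 with ⟨s, hs1, hs2⟩ | ⟨s, hs1, hs2⟩
          · rcases s with _ | ⟨s0, s1⟩
            · simp [hs1, hzw]
            · injection hs2 with h4 h5
              exfalso
              rw [List.append_eq] at h5
              rcases List.append_eq_nil_iff.mp h5.symm with ⟨-, rfl⟩
              exact hq rfl
          · exact nonneg_of_pos_aux hzw hpw r1 s hs1
        omega
    · -- v = p1 ++ r
      exact nonneg_of_pos_aux hzv hpv p1 r hr1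
  simp only [psum_cons, pval]
  omega

lemma wf_prefix_pos {u : List (CESym E.Gen (Ω.Obj n) n)} {a b : Ω.Obj n}
    (h : WF E u a b) : ∀ p q, u = p ++ q → p ≠ [] → q ≠ [] → 1 ≤ psum p := by
  induction h with
  | gen α =>
    intro p q hpq hp hq
    rcases p with _ | ⟨p1, _ | ⟨p2, _ | ⟨p3, p4⟩⟩⟩
    · exact absurd rfl hp
    · simp only [List.cons_append, List.nil_append] at hpq
      injection hpq with h1 h2; subst h1; simp [pval]
    · simp only [List.cons_append, List.nil_append] at hpq
      injection hpq with h1 h2; injection h2 with h2 h3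
      subst h1; subst h2; simp [pval]
    · simp only [List.cons_append, List.nil_append] at hpq
      injection hpq with h1 h2; injection h2 with h2 h3; injection h3 with h3 h4
      exfalso; rcases List.append_eq_nil_iff.mp h4.symm with ⟨-, rfl⟩; exact hq rfl
  | idd x =>
    intro p q hpq hp hq
    rcases p with _ | ⟨p1, _ | ⟨p2, _ | ⟨p3, p4⟩⟩⟩
    · exact absurd rfl hp
    · simp only [List.cons_append, List.nil_append] at hpq
      injection hpq with h1 h2; subst h1; simp [pval]
    · simp only [List.cons_append, List.nil_append] at hpq
      injection hpq with h1 h2; injection h2 with h2 h3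
      subst h1; subst h2; simp [pval]
    · simp only [List.cons_append, List.nil_append] at hpq
      injection hpq with h1 h2; injection h2 with h2 h3; injection h3 with h3 h4
      exfalso; rcases List.append_eq_nil_iff.mp h4.symm with ⟨-, rfl⟩; exact hq rfl
  | compn v w av bv cv hv hw ihv ihw =>
    exact cw_prefix_pos_aux (wf_psum hv) (wf_psum hw) ihv ihw
  | compk k hk v w av bv av' bv' hv hw hc ihv ihw =>
    exact cw_prefix_pos_aux (wf_psum hv) (wf_psum hw) ihv ihw

lemma wf_prefix_nonneg {u : List (CESym E.Gen (Ω.Obj n) n)} {a b : Ω.Obj n}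
    (h : WF E u a b) : ∀ p q, u = p ++ q → 0 ≤ psum p :=
  nonneg_of_pos_aux (wf_psum h) (wf_prefix_pos h)

lemma cw_inj {k k' : Fin (n + 1)} {v w v' w' : List (CESym E.Gen (Ω.Obj n) n)}
    {av bv aw bw av' bv' aw' bw' : Ω.Obj n}
    (hv : WF E v av bv) (hw : WF E w aw bw) (hv' : WF E v' av' bv') (hw' : WF E w' aw' bw')
    (h : cw k v w = cw k' v' w') : k = k' ∧ v = v' ∧ w = w' := by
  have hvne : v ≠ [] := by have := wf_length hv; intro hh; simp [hh] at this
  have hvne' : v' ≠ [] := by have := wf_length hv'; intro hh; simp [hh] at this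
  simp only [cw, List.cons_append] at h
  injection h with h0 h1
  have h2 : v ++ CESym.comp k :: w = v' ++ CESym.comp k' :: w' :=
    (List.append_inj' h1 rfl).1
  rcases List.append_eq_append_iff.mp h2 with ⟨r, hr1, hr2⟩ | ⟨r, hr1, hr2⟩
  · rcases r with _ | ⟨r0, r1⟩
    · simp only [List.nil_append] at hr2
      injection hr2 with h3 h4
      injection h3 with h5
      exact ⟨by exact_mod_cast h5, by simpa using hr1.symm, h4⟩
    · injection hr2 with h3 h4
      exfalso
      have := wf_prefix_pos hv' v (r0 :: r1) hr1 hvne (by simp)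
      rw [wf_psum hv] at this
      omega
  · rcases r with _ | ⟨r0, r1⟩
    · simp only [List.nil_append] at hr2
      injection hr2 with h3 h4
      injection h3 with h5
      exact ⟨by exact_mod_cast h5.symm, by simpa using hr1, h4.symm⟩
    · injection hr2 with h3 h4
      exfalso
      have := wf_prefix_pos hv v' (r0 :: r1) hr1 hvne' (by simp)
      rw [wf_psum hv'] at this
      omega

lemma wf_det {u : List (CESym E.Gen (Ω.Obj n) n)} {a b : Ω.Obj n}
    (h : WF E u a b) : ∀ u' a' b', WF E u' a' b' → u = u' → a = a' ∧ b = b' := by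
  induction h with
  | gen α =>
    intro u' a' b' h' he
    cases h' with
    | gen β =>
      injection he with _ he2; injection he2 with he2 _; injection he2 with he3
      subst he3; exact ⟨rfl, rfl⟩
    | idd x => simp at he
    | compn v w a1 b1 c1 hv hw =>
      exfalso
      have hl := congrArg List.length he
      have := wf_length hv; have := wf_length hw
      simp [cw] at hl; omega
    | compk k hk v w a1 b1 a1' b1' hv hw hc =>
      exfalso
      have hl := congrArg List.length he
      have := wf_length hv; have := wf_length hw
      simp [cw] at hl; omega
  | idd x =>
    intro u' a' b' h' he
    cases h' with
    | gen β => simp at he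
    | idd y =>
      injection he with _ he2; injection he2 with he2 _; injection he2 with he3
      subst he3; exact ⟨rfl, rfl⟩
    | compn v w a1 b1 c1 hv hw =>
      exfalso
      have hl := congrArg List.length he
      have := wf_length hv; have := wf_length hw
      simp [cw] at hl; omega
    | compk k hk v w a1 b1 a1' b1' hv hw hc =>
      exfalso
      have hl := congrArg List.length he
      have := wf_length hv; have := wf_length hw
      simp [cw] at hl; omega
  | compn v w a0 b0 c0 hv hw ihv ihw =>
    intro u' a' b' h' he
    cases h' with
    | gen β =>
      exfalso
      have hl := congrArg List.length he
      have := wf_length hv; have := wf_length hw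
      simp [cw] at hl; omega
    | idd y =>
      exfalso
      have hl := congrArg List.length he
      have := wf_length hv; have := wf_length hw
      simp [cw] at hl; omega
    | compn v' w' a1 b1 c1 hv' hw' =>
      obtain ⟨-, rfl, rfl⟩ := cw_inj hv hw hv' hw' he
      exact ⟨(ihw _ _ _ hw' rfl).1, (ihv _ _ _ hv' rfl).2⟩
    | compk k hk v' w' a1 b1 a1' b1' hv' hw' hc =>
      exfalso
      obtain ⟨hk2, -, -⟩ := cw_inj hv hw hv' hw' he
      have : (Fin.last n).val = k := congrArg Fin.val hk2
      simp [Fin.last] at this; omega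
  | compk k hk v w a0 b0 a0' b0' hv hw hc ihv ihw =>
    intro u' a' b' h' he
    cases h' with
    | gen β =>
      exfalso
      have hl := congrArg List.length he
      have := wf_length hv; have := wf_length hw
      simp [cw] at hl; omega
    | idd y =>
      exfalso
      have hl := congrArg List.length he
      have := wf_length hv; have := wf_length hw
      simp [cw] at hl; omega
    | compn v' w' a1 b1 c1 hv' hw' =>
      exfalso
      obtain ⟨hk2, -, -⟩ := cw_inj hv hw hv' hw' he
      have : k = (Fin.last n).val := congrArg Fin.val hk2
      simp [Fin.last] at this; omega
    | compk k' hk' v' w' a1 b1 a1' b1' hv' hw' hc' =>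
      obtain ⟨hk2, rfl, rfl⟩ := cw_inj hv hw hv' hw' he
      have hkk : k = k' := congrArg Fin.val hk2
      subst hkk
      obtain ⟨e1, e2⟩ := ihv _ _ _ hv' rfl
      obtain ⟨e3, e4⟩ := ihw _ _ _ hw' rfl
      subst e1; subst e2; subst e3; subst e4
      exact ⟨rfl, rfl⟩

lemma wf_parse {k : Fin (n + 1)} {v w e : List (CESym E.Gen (Ω.Obj n) n)}
    {av bv aw bw a b : Ω.Obj n}
    (hv : WF E v av bv) (hw : WF E w aw bw) (he : WF E e a b)
    {p q : List (CESym E.Gen (Ω.Obj n) n)} (hu : cw k v w = p ++ e ++ q) :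
    (p = [] ∧ q = []) ∨
    (∃ p' q', v = p' ++ e ++ q' ∧ p = .lpar :: p' ∧
      q = q' ++ .comp k :: w ++ [.rpar]) ∨
    (∃ p' q', w = p' ++ e ++ q' ∧ p = .lpar :: v ++ .comp k :: p' ∧
      q = q' ++ [.rpar]) := by
  have hene : e ≠ [] := by have := wf_length he; intro hh; simp [hh] at this
  rcases p with _ | ⟨p0, p1⟩
  · left
    refine ⟨rfl, ?_⟩
    by_contra hq
    have := cw_prefix_pos_aux (wf_psum hv) (wf_psum hw) (wf_prefix_pos hv)
      (wf_prefix_pos hw) e q (by simpa using hu) hene hq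
    rw [wf_psum he] at this
    omega
  · right
    simp only [cw, List.cons_append] at hu
    injection hu with h0 h1
    subst h0
    rw [List.append_assoc, List.cons_append, List.append_assoc] at h1
    -- h1 : v ++ (comp k :: (w ++ [rpar])) = p1 ++ (e ++ q)
    rcases List.append_eq_append_iff.mp h1 with ⟨r, hr1, hr2⟩ | ⟨r, hr1, hr2⟩
    · -- p1 = v ++ r, comp k :: (w ++ [rpar]) = r ++ (e ++ q)
      right
      rcases r with _ | ⟨r0, r1⟩
      · exfalso
        obtain ⟨t, rfl⟩ := wf_head he
        simp only [List.nil_append, List.cons_append] at hr2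
        injection hr2 with h2 _
        exact (by simp at h2 : ¬ (CESym.comp k = CESym.lpar)) h2
      · injection hr2 with h2 h3
        subst h2
        rw [List.append_eq] at h3
        -- h3 : w ++ [rpar] = r1 ++ (e ++ q)
        rcases List.append_eq_append_iff.mp h3 with ⟨s, hs1, hs2⟩ | ⟨s, hs1, hs2⟩
        · -- r1 = w ++ s, [rpar] = s ++ (e ++ q)
          exfalso
          have hl := congrArg List.length hs2
          have := wf_length he
          simp at hl
          omega
        · -- w = r1 ++ s, e ++ q = s ++ [rpar]
          rcases List.append_eq_append_iff.mp hs2.symm with ⟨t, ht1, ht2⟩ | ⟨t, ht1, ht2⟩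
          swap
          · -- s = e ++ t, q = t ++ [rpar]
            exact ⟨r1, t, by simp [hs1, ht1, List.append_assoc],
              by simp [hr1, List.append_assoc], ht2⟩
          · -- e = s ++ t, [rpar] = t ++ q
            rcases t with _ | ⟨t0, t1⟩
            · -- e = s, q = [rpar]
              refine ⟨r1, [], by simpa [ht1] using hs1, by simp [hr1, List.append_assoc],
                by simpa using ht2.symm⟩
            · injection ht2 with h4 h5
              rcases List.append_eq_nil_iff.mp h5.symm with ⟨rfl, rfl⟩
              exfalso
              -- e = s ++ [rpar] with w = r1 ++ s : psum s = 1 but ≤ 0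
              have hes : psum e = psum s + (-1) := by
                rw [ht1]; subst h4; simp [pval]
              rw [wf_psum he] at hes
              have h6 : psum w = psum r1 + psum s := by rw [hs1]; simp
              rw [wf_psum hw] at h6
              have h7 := wf_prefix_nonneg hw r1 s hs1
              omega
    · -- v = p1 ++ r, e ++ q = r ++ (comp k :: (w ++ [rpar]))
      left
      rcases List.append_eq_append_iff.mp hr2.symm with ⟨s, hs1, hs2⟩ | ⟨s, hs1, hs2⟩
      swap
      · -- r = e ++ s, q = s ++ (comp k :: (w ++ [rpar]))
        exact ⟨p1, s, by simp [hr1, hs1, List.append_assoc], rfl,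
          by simp [hs2, List.append_assoc]⟩
      · -- e = r ++ s, comp k :: (w ++ [rpar]) = s ++ q
        rcases s with _ | ⟨s0, s1⟩
        · -- e = r
          refine ⟨p1, [], by simpa [hs1] using hr1, rfl, by simpa [List.append_assoc] using hs2.symm⟩
        · injection hs2 with h2 h3
          exfalso
          -- e = r ++ (comp k :: s1), contradiction
          have hrne : r ≠ [] := by
            rintro rfl
            obtain ⟨t, ht⟩ := wf_head he
            rw [hs1] at ht
            simp at ht
            subst h2
            exact (by simp : ¬ (CESym.lpar = CESym.comp k)) ht.1.symm
          have h4 := wf_prefix_pos he r (s0 :: s1) hs1 hrne (by simp)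
          have h5 : psum v = psum p1 + psum r := by rw [hr1]; simp
          rw [wf_psum hv] at h5
          have h6 := wf_prefix_nonneg hv p1 r hr1
          omega

lemma wf_subst {e e' : List (CESym E.Gen (Ω.Obj n) n)} {a b : Ω.Obj n}
    (he : WF E e a b) (he' : WF E e' a b) :
    ∀ {u : List (CESym E.Gen (Ω.Obj n) n)} {A B : Ω.Obj n}, WF E u A B →
      ∀ p q, u = p ++ e ++ q → WF E (p ++ e' ++ q) A B := by
  have hene : e ≠ [] := by have := wf_length he; intro hh; simp [hh] at this
  intro u A B hu
  induction hu with
  | gen α =>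
    intro p q hpq
    have hl := congrArg List.length hpq
    have h3 := wf_length he
    simp at hl
    have hp : p = [] := List.length_eq_zero_iff.mp (by omega)
    have hq : q = [] := List.length_eq_zero_iff.mp (by omega)
    subst hp; subst hq
    obtain ⟨rfl, rfl⟩ := wf_det he _ _ _ (WF.gen α) (by simpa using hpq.symm)
    simpa using he'
  | idd x =>
    intro p q hpq
    have hl := congrArg List.length hpq
    have h3 := wf_length he
    simp at hl
    have hp : p = [] := List.length_eq_zero_iff.mp (by omega)
    have hq : q = [] := List.length_eq_zero_iff.mp (by omega)
    subst hp; subst hq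
    obtain ⟨rfl, rfl⟩ := wf_det he _ _ _ (WF.idd x) (by simpa using hpq.symm)
    simpa using he'
  | compn v w a0 b0 c0 hv hw ihv ihw =>
    intro p q hpq
    rcases wf_parse hv hw he hpq with ⟨rfl, rfl⟩ | ⟨p', q', hv2, rfl, rfl⟩ |
      ⟨p', q', hw2, rfl, rfl⟩
    · obtain ⟨rfl, rfl⟩ := wf_det he _ _ _ (WF.compn v w a0 b0 c0 hv hw)
        (by simpa using hpq.symm)
      simpa using he'
    · have h1 := WF.compn _ w _ _ _ (ihv p' q' hv2) hw
      have h2 : cw (Fin.last n) (p' ++ e' ++ q') w =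
          (CESym.lpar :: p') ++ e' ++ (q' ++ CESym.comp (Fin.last n) :: w ++ [CESym.rpar]) := by
        simp [cw, List.append_assoc]
      rwa [h2] at h1
    · have h1 := WF.compn v _ _ _ _ hv (ihw p' q' hw2)
      have h2 : cw (Fin.last n) v (p' ++ e' ++ q') =
          (CESym.lpar :: v ++ CESym.comp (Fin.last n) :: p') ++ e' ++ (q' ++ [CESym.rpar]) := by
        simp [cw, List.append_assoc]
      rwa [h2] at h1
  | compk k hk v w a0 b0 a0' b0' hv hw hc ihv ihw =>
    intro p q hpq
    rcases wf_parse hv hw he hpq with ⟨rfl, rfl⟩ | ⟨p', q', hv2, rfl, rfl⟩ |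
      ⟨p', q', hw2, rfl, rfl⟩
    · obtain ⟨rfl, rfl⟩ := wf_det he _ _ _ (WF.compk k hk v w a0 b0 a0' b0' hv hw hc)
        (by simpa using hpq.symm)
      simpa using he'
    · have h1 := WF.compk k hk _ w _ _ _ _ (ihv p' q' hv2) hw hc
      have h2 : cw ⟨k, Nat.lt_succ_of_lt hk⟩ (p' ++ e' ++ q') w =
          (CESym.lpar :: p') ++ e' ++
            (q' ++ CESym.comp ⟨k, Nat.lt_succ_of_lt hk⟩ :: w ++ [CESym.rpar]) := by
        simp [cw, List.append_assoc]
      rwa [h2] at h1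
    · have h1 := WF.compk k hk v _ _ _ _ _ hv (ihw p' q' hw2) hc
      have h2 : cw ⟨k, Nat.lt_succ_of_lt hk⟩ v (p' ++ e' ++ q') =
          (CESym.lpar :: v ++ CESym.comp ⟨k, Nat.lt_succ_of_lt hk⟩ :: p') ++ e' ++
            (q' ++ [CESym.rpar]) := by
        simp [cw, List.append_assoc]
      rwa [h2] at h1

end Aux

/-- Substitution: if `u = v e w` is well formed with `e` well formed, and `e'` is a well
formed word with the same `n`-source and `n`-target as `e`, then `v e' w` is well formed. -/
theorem wf_substitution {Ω : StrictOmegaCat} {n : ℕ} (E : CellExt Ω n)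
    (hΩ : Ω.IsNCat n)
    (v w e e' : List (CESym E.Gen (Ω.Obj n) n)) (a b A B : Ω.Obj n)
    (hu : WF E (v ++ e ++ w) A B) (he : WF E e a b) (he' : WF E e' a b) :
    ∃ A' B', WF E (v ++ e' ++ w) A' B' :=
  ⟨A, B, wf_subst he he' hu v w rfl⟩
end

section
/- The number of occurrences of each generator symbol c_α in a well formed word is invariant under elementary movements; consequently, for distinct generators α ≠ β, the words (c_α) and (c_β) are not equivalent, i.e., the canonical map from the generating set Σ to the equivalence classes of well formed words is injective. -/
/-- The word `(i_x)`. -/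
def iw {G X : Type*} {n : ℕ} (x : X) : List (CESym G X n) := [.lpar, .idd x, .rpar]

/-- The five kinds of pairs `(e, e')` of well formed words occurring in elementary
movements: associativity, left and right unit removal, identity merging, interchange. -/
inductive ElemPair {Ω : StrictOmegaCat} {n : ℕ} (E : CellExt Ω n) :
    List (CESym E.Gen (Ω.Obj n) n) → List (CESym E.Gen (Ω.Obj n) n) → Prop
  | assoc (k : Fin (n + 1)) (x y z : List (CESym E.Gen (Ω.Obj n) n))
      (hx : ∃ a b, WF E x a b) (hy : ∃ a b, WF E y a b) (hz : ∃ a b, WF E z a b) :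
      ElemPair E (cw k (cw k x y) z) (cw k x (cw k y z))
  | unit_left_n (x : List (CESym E.Gen (Ω.Obj n) n)) (a b : Ω.Obj n) (hx : WF E x a b) :
      ElemPair E (cw (Fin.last n) (iw b) x) x
  | unit_left_k (k : ℕ) (hk : k < n) (x : List (CESym E.Gen (Ω.Obj n) n))
      (a b : Ω.Obj n) (hx : WF E x a b) :
      ElemPair E (cw ⟨k, Nat.lt_succ_of_lt hk⟩ (iw (Ω.unit hk (Ω.tgt hk b))) x) x
  | unit_right_n (x : List (CESym E.Gen (Ω.Obj n) n)) (a b : Ω.Obj n) (hx : WF E x a b) :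
      ElemPair E (cw (Fin.last n) x (iw a)) x
  | unit_right_k (k : ℕ) (hk : k < n) (x : List (CESym E.Gen (Ω.Obj n) n))
      (a b : Ω.Obj n) (hx : WF E x a b) :
      ElemPair E (cw ⟨k, Nat.lt_succ_of_lt hk⟩ x (iw (Ω.unit hk (Ω.src hk a)))) x
  | merge (k : ℕ) (hk : k < n) (c d : Ω.Obj n) :
      ElemPair E (cw ⟨k, Nat.lt_succ_of_lt hk⟩ (iw c) (iw d)) (iw (Ω.comp hk c d))
  | interchange (l k : ℕ) (hlk : l < k) (hk : k ≤ n)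
      (x y z t : List (CESym E.Gen (Ω.Obj n) n))
      (hx : ∃ a b, WF E x a b) (hy : ∃ a b, WF E y a b)
      (hz : ∃ a b, WF E z a b) (ht : ∃ a b, WF E t a b) :
      ElemPair E
        (cw ⟨l, by omega⟩ (cw ⟨k, by omega⟩ x y) (cw ⟨k, by omega⟩ z t))
        (cw ⟨k, by omega⟩ (cw ⟨l, by omega⟩ x z) (cw ⟨l, by omega⟩ y t))

/-- An elementary movement from `u` to `u'`: a decomposition `u = v e w`, `u' = v e' w`
with `e`, `e'` well formed words forming one of the five elementary pairs. -/
def ElemMove {Ω : StrictOmegaCat} {n : ℕ} (E : CellExt Ω n)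
    (u u' : List (CESym E.Gen (Ω.Obj n) n)) : Prop :=
  ∃ v w e e', u = v ++ e ++ w ∧ u' = v ++ e' ++ w ∧
    (∃ a b, WF E e a b) ∧ (∃ a b, WF E e' a b) ∧ ElemPair E e e'

/-- Two well formed words are equivalent when they are connected by a finite zig-zag of
elementary movements. -/
def WEquiv {Ω : StrictOmegaCat} {n : ℕ} (E : CellExt Ω n)
    (u u' : List (CESym E.Gen (Ω.Obj n) n)) : Prop :=
  Relation.EqvGen (ElemMove E) u u'

/-- The word `(c_α)`. -/
def gw {G X : Type*} {n : ℕ} (α : G) : List (CESym G X n) := [.lpar, .gen α, .rpar]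

/-- The number of occurrences of the generator symbol `c_α` in a word. -/
def genCount {G X : Type*} {n : ℕ} [DecidableEq G] (α : G) (u : List (CESym G X n)) : ℕ :=
  u.countP (fun s => match s with | CESym.gen β => decide (β = α) | _ => false)


section GenCount

variable {G X : Type*} {n : ℕ} [DecidableEq G] (α : G)

lemma genCount_append (u v : List (CESym G X n)) :
    genCount α (u ++ v) = genCount α u + genCount α v :=
  List.countP_append

lemma genCount_cw (k : Fin (n + 1)) (v w : List (CESym G X n)) :
    genCount α (cw k v w) = genCount α v + genCount α w := by
  simp [cw, genCount, List.countP_append]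

lemma genCount_iw (x : X) : genCount α (iw (G := G) (n := n) x) = 0 := by
  simp [iw, genCount]

lemma genCount_gw (β : G) :
    genCount α (gw (X := X) (n := n) β) = if β = α then 1 else 0 := by
  simp [gw, genCount, List.countP_cons]

end GenCount

section Invariance

variable {Ω : StrictOmegaCat} {n : ℕ} {E : CellExt Ω n} [DecidableEq E.Gen]
  {u u' : List (CESym E.Gen (Ω.Obj n) n)}

lemma ElemPair.genCount_eq {e e' : List (CESym E.Gen (Ω.Obj n) n)} (h : ElemPair E e e')
    (α : E.Gen) : genCount α e = genCount α e' := by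
  cases h <;> simp only [genCount_cw, genCount_iw] <;> omega

lemma ElemMove.genCount_eq (h : ElemMove E u u') (α : E.Gen) :
    genCount α u = genCount α u' := by
  obtain ⟨v, w, e, e', rfl, rfl, -, -, hp⟩ := h
  simp only [genCount_append, hp.genCount_eq α]

lemma WEquiv.genCount_eq (h : WEquiv E u u') (α : E.Gen) :
    genCount α u = genCount α u' :=
  congrArg (Quot.lift (genCount α) fun _ _ hm => hm.genCount_eq α) (Quot.eqvGen_sound h)

end Invariance

theorem genCount_invariant_and_injective_general {Ω : StrictOmegaCat} {n : ℕ}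
    (E : CellExt Ω n) [DecidableEq E.Gen] :
    (∀ (u u' : List (CESym E.Gen (Ω.Obj n) n)), ElemMove E u u' →
      ∀ α : E.Gen, genCount α u = genCount α u') ∧
    Function.Injective (fun α : E.Gen => Quot.mk (WEquiv E) (gw α)) := by
  refine ⟨fun u u' h α => h.genCount_eq α, fun α β h => ?_⟩
  have hcount : genCount α (gw α) = genCount α (gw β) :=
    congrArg (Quot.lift (genCount α) fun _ _ hw => hw.genCount_eq α) h
  by_contra hne
  simp [genCount_gw, Ne.symm hne] at hcount

/-- The number of occurrences of each generator symbol is invariant under elementary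
movements; consequently the canonical map from the generating set to the set of
equivalence classes of well formed words, `α ↦ [(c_α)]`, is injective. -/
theorem genCount_invariant_and_injective {Ω : StrictOmegaCat} {n : ℕ}
    (E : CellExt Ω n) [DecidableEq E.Gen] (hΩ : Ω.IsNCat n) :
    (∀ (u u' : List (CESym E.Gen (Ω.Obj n) n)), ElemMove E u u' →
      ∀ α : E.Gen, genCount α u = genCount α u') ∧
    Function.Injective (fun α : E.Gen => Quot.mk (WEquiv E) (gw α)) :=
  genCount_invariant_and_injective_general E
end

section
/- Let f : C → D be a functor between 1-categories such that every factorization of the image of an arrow through a composition lifts uniquely (f is right orthogonal to the 'composition' map). Then f also has unique lifts of identities: for any arrow x of C and object y of D with f(x) = id_y, there is a unique object x' of C with x = id_{x'} and f(x') = y. -/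
open CategoryTheory

lemma factorization_id_eq {D : Type*} [Category D] {A B : D} (e : A = B) (γ : A ⟶ B)
    (hγ : γ = eqToHom e) :
    (⟨B, γ, 𝟙 B, Category.comp_id γ⟩ : Factorization γ) =
      ⟨A, 𝟙 A, γ, Category.id_comp γ⟩ := by
  subst e
  simp only [eqToHom_refl] at hγ
  subst hγ
  rfl

/-- A functor with unique lifts of factorizations (right orthogonality to the composition
map) also has unique lifts of identities: if `f(x) = id_y` then there is a unique object
`x'` with `x = id_{x'}` and `f(x') = y`. -/
theorem uniqueIdentityLift_of_uniqueFactorizationLift {C D : Type*} [Category C] [Category D]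
    (F : C ⥤ D) (hF : ∀ ⦃a b : C⦄ (x : a ⟶ b), Function.Bijective (factMap F x))
    {a b : C} (x : a ⟶ b) (y : D) (hy : F.obj a = y) (hy' : F.obj b = y)
    (hx : F.map x = eqToHom (hy.trans hy'.symm)) :
    ∃! x' : C, F.obj x' = y ∧ ∃ (h1 : a = x') (h2 : x' = b), x = eqToHom (h1.trans h2) := by
  have key := (hF x).injective (a₁ := ⟨b, x, 𝟙 b, Category.comp_id x⟩)
    (a₂ := ⟨a, 𝟙 a, x, Category.id_comp x⟩) (by
      show Factorization.mk (F.obj b) (F.map x) (F.map (𝟙 b)) _ =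
        Factorization.mk (F.obj a) (F.map (𝟙 a)) (F.map x) _
      simp only [F.map_id]
      exact factorization_id_eq (hy.trans hy'.symm) (F.map x) hx)
  rw [Factorization.mk.injEq] at key
  obtain ⟨h, hl, hr⟩ := key
  subst h
  have hx' : x = 𝟙 b := eq_of_heq hl
  subst hx'
  exact ⟨b, ⟨hy, rfl, rfl, by simp⟩, fun z ⟨_, hz, _⟩ => hz.symm⟩
end

section
/- Let f : C → D be a discrete Conduché functor between 1-categories such that f is surjective on objects and on arrows. If C is free on a graph, then D is free on a graph, and the generating arrows of D are exactly the images under f of the generating arrows of C. -/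
/-!
In a free category the generators are exactly the indecomposable arrows: an arrow is an
identity iff its path is empty, and path length is additive. A discrete Conduché functor
reflects identities (if `F.map γ` is an identity, the factorizations `𝟙 ≫ γ` and `γ ≫ 𝟙`
have the same image, so they coincide), hence it
preserves and reflects indecomposability. So every path in `D` over `F.map f` lifts, one
generator at a time, to a path in `C` composing to `f`; uniqueness of paths in `C` then gives
uniqueness in `D`, and existence comes from mapping the path of a preimage.
-/

open CategoryTheory

section Arrows

variable {C : Type*} [Category C]

def IsEqToHom {x y : C} (γ : x ⟶ y) : Prop := ∃ e : x = y, γ = eqToHom e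

def IsIndecomposable {x y : C} (γ : x ⟶ y) : Prop :=
  ¬ IsEqToHom γ ∧ ∀ {m : C} (u : x ⟶ m) (v : m ⟶ y), u ≫ v = γ → IsEqToHom u ∨ IsEqToHom v

@[simp]
lemma isEqToHom_eqToHom {x y : C} (e : x = y) : IsEqToHom (eqToHom e) := ⟨e, rfl⟩

@[simp]
lemma isEqToHom_comp_eqToHom_iff {x y z : C} (g : x ⟶ y) (e : y = z) :
    IsEqToHom (g ≫ eqToHom e) ↔ IsEqToHom g := by
  subst e; simp

@[simp]
lemma isEqToHom_eqToHom_comp_iff {x y z : C} (e : x = y) (g : y ⟶ z) :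
    IsEqToHom (eqToHom e ≫ g) ↔ IsEqToHom g := by
  subst e; simp

@[simp]
lemma isIndecomposable_comp_eqToHom_iff {x y z : C} (g : x ⟶ y) (e : y = z) :
    IsIndecomposable (g ≫ eqToHom e) ↔ IsIndecomposable g := by
  subst e; simp

@[simp]
lemma isIndecomposable_eqToHom_comp_iff {x y z : C} (e : x = y) (g : y ⟶ z) :
    IsIndecomposable (eqToHom e ≫ g) ↔ IsIndecomposable g := by
  subst e; simp

variable {D : Type*} [Category D]

lemma IsEqToHom.map {x y : C} {γ : x ⟶ y} (hγ : IsEqToHom γ) (F : C ⥤ D) :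
    IsEqToHom (F.map γ) := by
  obtain ⟨e, rfl⟩ := hγ
  rw [eqToHom_map]
  exact isEqToHom_eqToHom _

end Arrows

section Basis

variable {C : Type*} [Category C] {S : ∀ ⦃x y : C⦄, (x ⟶ y) → Prop}

namespace GenPath

def append : ∀ {x y z : C}, GenPath S x y → GenPath S y z → GenPath S x z
  | _, _, _, .nil _, q => q
  | _, _, _, .cons f hf p, q => .cons f hf (p.append q)

def length : ∀ {x y : C}, GenPath S x y → ℕ
  | _, _, .nil _ => 0
  | _, _, .cons _ _ p => p.length + 1

@[simp]
lemma eval_append : ∀ {x y z : C} (p : GenPath S x y) (q : GenPath S y z),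
    (p.append q).eval = p.eval ≫ q.eval
  | _, _, _, .nil _, q => by simp [append, eval]
  | _, _, _, .cons f hf p, q => by simp [append, eval, eval_append p q]

@[simp]
lemma length_append : ∀ {x y z : C} (p : GenPath S x y) (q : GenPath S y z),
    (p.append q).length = p.length + q.length
  | _, _, _, .nil _, q => by simp [append, length]
  | _, _, _, .cons f hf p, q => by simp only [append, length, length_append p q]; omega

lemma isEqToHom_eval_of_length_eq_zero {x y : C} {p : GenPath S x y} (hp : p.length = 0) :
    IsEqToHom p.eval := by
  cases p with
  | nil x => exact isEqToHom_eqToHom rfl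
  | cons => simp [length] at hp

end GenPath

namespace IsBasis

lemma length_eq_zero_iff (hS : IsBasis S) {x y : C} (p : GenPath S x y) :
    p.length = 0 ↔ IsEqToHom p.eval := by
  refine ⟨GenPath.isEqToHom_eval_of_length_eq_zero, ?_⟩
  rintro ⟨rfl, hp⟩
  rw [(hS _).unique hp (rfl : (GenPath.nil x).eval = eqToHom rfl)]
  rfl

lemma not_isEqToHom (hS : IsBasis S) {x y : C} {f : x ⟶ y} (hf : S f) : ¬ IsEqToHom f := by
  have hlen := hS.length_eq_zero_iff (.cons f hf (.nil y))
  simpa [GenPath.eval, GenPath.length] using hlen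

lemma iff_isIndecomposable (hS : IsBasis S) {x y : C} (f : x ⟶ y) : S f ↔ IsIndecomposable f := by
  constructor
  · intro hf
    refine ⟨hS.not_isEqToHom hf, fun u v huv => ?_⟩
    obtain ⟨pu, rfl, -⟩ := hS u
    obtain ⟨pv, rfl, -⟩ := hS v
    have hsingle : (GenPath.cons f hf (.nil y)).eval = f := by simp [GenPath.eval]
    have hlen := congrArg GenPath.length
      ((hS f).unique (by rwa [GenPath.eval_append]) hsingle)
    simp only [GenPath.length_append, GenPath.length] at hlen
    rcases Nat.add_eq_one_iff.mp hlen with ⟨hu, -⟩ | ⟨-, hv⟩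
    · exact .inl ((hS.length_eq_zero_iff pu).mp hu)
    · exact .inr ((hS.length_eq_zero_iff pv).mp hv)
  · rintro ⟨hnot, hfac⟩
    obtain ⟨p, rfl, -⟩ := hS f
    cases p with
    | nil x => exact absurd (isEqToHom_eqToHom rfl) hnot
    | cons s hs p =>
      rcases hfac s p.eval rfl with hs' | hp
      · exact absurd hs' (hS.not_isEqToHom hs)
      · cases p with
        | nil => simpa [GenPath.eval] using hs
        | cons => simp [← hS.length_eq_zero_iff, GenPath.length] at hp

end IsBasis

end Basis

section Conduche

variable {C D : Type*} [Category C] [Category D] {F : C ⥤ D}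

namespace IsDiscreteConduche

lemma exists_lift (hF : IsDiscreteConduche F) {x y : C} (γ : x ⟶ y) {m : D}
    (l : F.obj x ⟶ m) (r : m ⟶ F.obj y) (hlr : l ≫ r = F.map γ) :
    ∃ (P : Factorization γ) (e : F.obj P.mid = m),
      F.map P.left = l ≫ eqToHom e.symm ∧ F.map P.right = eqToHom e ≫ r := by
  obtain ⟨⟨c, a, b, hab⟩, hP⟩ := (hF γ).2 ⟨m, l, r, hlr⟩
  simp only [factMap, Factorization.mk.injEq] at hP
  obtain ⟨rfl, hl, hr⟩ := hP
  exact ⟨⟨c, a, b, hab⟩, rfl, by simpa using eq_of_heq hl, by simpa using eq_of_heq hr⟩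

lemma isEqToHom_of_map (hF : IsDiscreteConduche F) {x y : C} {γ : x ⟶ y}
    (hγ : IsEqToHom (F.map γ)) : IsEqToHom γ := by
  obtain ⟨h, hγ⟩ := hγ
  have hsame : factMap F γ ⟨x, 𝟙 x, γ, Category.id_comp γ⟩
      = factMap F γ ⟨y, γ, 𝟙 y, Category.comp_id γ⟩ := by
    simp only [factMap, Factorization.mk.injEq, hγ, F.map_id]
    exact ⟨h, (eqToHom_heq_id_dom _ _ h).symm, eqToHom_heq_id_cod _ _ h⟩
  have := (hF γ).1 hsame
  simp only [Factorization.mk.injEq] at this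
  obtain ⟨rfl, hid, -⟩ := this
  exact ⟨rfl, by simpa using (eq_of_heq hid).symm⟩

lemma isIndecomposable_map_iff (hF : IsDiscreteConduche F) {x y : C} (γ : x ⟶ y) :
    IsIndecomposable (F.map γ) ↔ IsIndecomposable γ := by
  constructor
  · rintro ⟨hnot, hfac⟩
    refine ⟨fun hγ => hnot (hγ.map F), fun u v huv => ?_⟩
    exact (hfac (F.map u) (F.map v) (by rw [← F.map_comp, huv])).imp
      hF.isEqToHom_of_map hF.isEqToHom_of_map
  · rintro ⟨hnot, hfac⟩
    refine ⟨fun hγ => hnot (hF.isEqToHom_of_map hγ), fun l r hlr => ?_⟩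
    obtain ⟨P, e, hl, hr⟩ := hF.exists_lift γ l r hlr
    refine (hfac P.left P.right P.fac).imp (fun hu => ?_) (fun hv => ?_)
    · simpa [hl] using hu.map F
    · simpa [hr] using hv.map F

end IsDiscreteConduche

def mapGenerators (F : C ⥤ D) (S : ∀ ⦃x y : C⦄, (x ⟶ y) → Prop) :
    ∀ ⦃d d' : D⦄, (d ⟶ d') → Prop :=
  fun ⦃d d' : D⦄ (g : d ⟶ d') => ∃ (c c' : C) (f : c ⟶ c')
    (h : F.obj c = d) (h' : F.obj c' = d'), S f ∧ F.map f = eqToHom h ≫ g ≫ eqToHom h'.symm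

variable {S : ∀ ⦃x y : C⦄, (x ⟶ y) → Prop}

lemma isIndecomposable_of_mapGenerators (hF : IsDiscreteConduche F) (hS : IsBasis S)
    {d d' : D} {g : d ⟶ d'} (hg : mapGenerators F S g) : IsIndecomposable g := by
  obtain ⟨c, c', f, rfl, rfl, hf, hfg⟩ := hg
  simpa [hfg] using (hF.isIndecomposable_map_iff f).mpr ((hS.iff_isIndecomposable f).mp hf)

def GenPath.map (F : C ⥤ D) :
    ∀ {x y : C}, GenPath S x y → GenPath (mapGenerators F S) (F.obj x) (F.obj y)
  | _, _, .nil x => .nil _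
  | _, _, .cons f hf p => .cons (F.map f) ⟨_, _, f, rfl, rfl, hf, by simp⟩ (p.map F)

@[simp]
lemma GenPath.eval_map (F : C ⥤ D) :
    ∀ {x y : C} (p : GenPath S x y), (p.map F).eval = F.map p.eval
  | _, _, .nil x => by simp [map, eval]
  | _, _, .cons f hf p => by simp [map, eval, eval_map F p]

lemma GenPath.exists_lift (hF : IsDiscreteConduche F) (hS : IsBasis S) :
    ∀ {d d' : D} (q : GenPath (mapGenerators F S) d d') {c c' : C}
      (h : F.obj c = d) (h' : F.obj c' = d') (f : c ⟶ c'),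
      F.map f = eqToHom h ≫ q.eval ≫ eqToHom h'.symm →
      ∃ p : GenPath S c c', p.eval = f ∧ HEq (p.map F) q := by
  intro d d' q
  induction q with
  | nil d =>
    intro c c' h h' f hf
    subst h
    obtain ⟨rfl, rfl⟩ := hF.isEqToHom_of_map (γ := f) (by simp [hf, eval])
    exact ⟨.nil c, rfl, .rfl⟩
  | cons g hg q ih =>
    intro c c' h h' f hf
    obtain ⟨P, e, hl, hr⟩ := hF.exists_lift f (eqToHom h ≫ g) (q.eval ≫ eqToHom h'.symm)
      (by simp [hf, eval])
    have hleft : S P.left := by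
      rw [hS.iff_isIndecomposable, ← hF.isIndecomposable_map_iff, hl]
      simpa using isIndecomposable_of_mapGenerators hF hS hg
    obtain ⟨p, hp, hpq⟩ := ih e h' P.right (by simp [hr])
    refine ⟨.cons P.left hleft p, by simp [eval, hp, P.fac], ?_⟩
    subst h h' e
    obtain rfl : F.map P.left = g := by simpa using hl
    obtain rfl := eq_of_heq hpq
    rfl

end Conduche

theorem isBasis_image_of_isDiscreteConduche_general {C D : Type*} [Category C] [Category D]
    (F : C ⥤ D) (hF : IsDiscreteConduche F)
    (hmap : ∀ {d d' : D} (g : d ⟶ d'), ∃ (c c' : C) (f : c ⟶ c')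
      (h : F.obj c = d) (h' : F.obj c' = d'),
      F.map f = eqToHom h ≫ g ≫ eqToHom h'.symm)
    (S : ∀ ⦃x y : C⦄, (x ⟶ y) → Prop) (hS : IsBasis S) :
    IsBasis (fun ⦃d d' : D⦄ (g : d ⟶ d') => ∃ (c c' : C) (f : c ⟶ c')
      (h : F.obj c = d) (h' : F.obj c' = d'),
      S f ∧ F.map f = eqToHom h ≫ g ≫ eqToHom h'.symm) := by
  show IsBasis (mapGenerators F S)
  intro d d' g
  obtain ⟨c, c', f, rfl, rfl, hf⟩ := hmap g
  obtain rfl : F.map f = g := by simpa using hf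
  obtain ⟨p, rfl, hp⟩ := hS f
  refine ⟨p.map F, p.eval_map F, fun q hq => ?_⟩
  obtain ⟨p', hp', hq'⟩ := GenPath.exists_lift hF hS q rfl rfl p.eval (by simp [hq])
  rw [← eq_of_heq hq', hp p' hp']

/-- If `f : C → D` is a discrete Conduché functor which is surjective on objects and on
arrows, and `C` is free on a graph with generating arrows `S`, then `D` is free on a graph
whose generating arrows are exactly the images under `f` of the arrows of `S`. -/
theorem isBasis_image_of_isDiscreteConduche {C D : Type*} [Category C] [Category D]
    (F : C ⥤ D) (hF : IsDiscreteConduche F)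
    (hobj : Function.Surjective F.obj)
    (hmap : ∀ {d d' : D} (g : d ⟶ d'), ∃ (c c' : C) (f : c ⟶ c')
      (h : F.obj c = d) (h' : F.obj c' = d'),
      F.map f = eqToHom h ≫ g ≫ eqToHom h'.symm)
    (S : ∀ ⦃x y : C⦄, (x ⟶ y) → Prop) (hS : IsBasis S) :
    IsBasis (fun ⦃d d' : D⦄ (g : d ⟶ d') => ∃ (c c' : C) (f : c ⟶ c')
      (h : F.obj c = d) (h' : F.obj c' = d'),
      S f ∧ F.map f = eqToHom h ≫ g ≫ eqToHom h'.symm) :=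
  isBasis_image_of_isDiscreteConduche_general F hF hmap S hS
end
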